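/- arXiv:1302.0487 — 4 statements merged into one kernel-verified Lean document; each statement's English description precedes it below -/
import Mathlib

section
/- Let M, N be positive integers, let c_i(u,v) ∈ ℕ for 1 ≤ i ≤ M and 1 ≤ u, v ≤ N be nonnegative integer edge costs with c_i(u,v) ≤ C_max for all i, u, v, and let α₁, …, α_M ∈ ℕ satisfy α_i ≤ N·C_max for all i. Define the combined edge weight w(u,v) = ∑_{i=1}^M c_i(u,v)·(N·C_max + 1)^{i−1} and α = ∑_{i=1}^M α_i·(N·C_max + 1)^{i−1}. Then there exists a permutation π of {1,…,N} with ∑_{j=1}^N c_i(j, π(j)) = α_i for every 1 ≤ i ≤ M if and only if there exists a permutation π of {1,…,N} with ∑_{j=1}^N w(j, π(j)) = α. (Paper's Theorem 3.2: combining M exact weight perfect matching criteria into one via base-(N·C_max+1) representation.) -/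
lemma base_rep_unique (B : ℕ) : ∀ (M : ℕ) (f g : ℕ → ℕ),
    (∀ i < M, f i < B) → (∀ i < M, g i < B) →
    (∑ i ∈ Finset.range M, f i * B ^ i = ∑ i ∈ Finset.range M, g i * B ^ i) →
    ∀ i < M, f i = g i := by
  intro M
  induction M with
  | zero => intro f g _ _ _ i hi; omega
  | succ n ih =>
    intro f g hf hg hsum i hi
    have hB : 0 < B := lt_of_le_of_lt (Nat.zero_le _) (hf 0 (Nat.succ_pos n))
    rw [Finset.sum_range_succ' (fun i => f i * B ^ i),
        Finset.sum_range_succ' (fun i => g i * B ^ i)] at hsum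
    simp only [pow_succ, pow_zero, mul_one] at hsum
    have h1 : ∑ i ∈ Finset.range n, f (i + 1) * (B ^ i * B) + f 0
        = (∑ i ∈ Finset.range n, f (i + 1) * B ^ i) * B + f 0 := by
      rw [Finset.sum_mul]
      congr 1
      exact Finset.sum_congr rfl fun i _ => (mul_assoc _ _ _).symm
    have h2 : ∑ i ∈ Finset.range n, g (i + 1) * (B ^ i * B) + g 0
        = (∑ i ∈ Finset.range n, g (i + 1) * B ^ i) * B + g 0 := by
      rw [Finset.sum_mul]
      congr 1
      exact Finset.sum_congr rfl fun i _ => (mul_assoc _ _ _).symm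
    rw [h1, h2] at hsum
    have hf0 : f 0 < B := hf 0 (Nat.succ_pos n)
    have hg0 : g 0 < B := hg 0 (Nat.succ_pos n)
    rw [mul_comm (∑ i ∈ Finset.range n, f (i + 1) * B ^ i) B,
        mul_comm (∑ i ∈ Finset.range n, g (i + 1) * B ^ i) B] at hsum
    have hmod : f 0 = g 0 := by
      have := congrArg (· % B) hsum
      simp only [Nat.mul_add_mod, Nat.mod_eq_of_lt hf0, Nat.mod_eq_of_lt hg0] at this
      exact this
    have hdiv : ∑ i ∈ Finset.range n, f (i + 1) * B ^ i
        = ∑ i ∈ Finset.range n, g (i + 1) * B ^ i := by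
      have := congrArg (· / B) hsum
      simp only [Nat.mul_add_div hB, Nat.div_eq_of_lt hf0, Nat.div_eq_of_lt hg0,
        Nat.add_zero] at this
      exact this
    have hrec := ih (fun i => f (i + 1)) (fun i => g (i + 1))
      (fun i hi => hf (i + 1) (by omega)) (fun i hi => hg (i + 1) (by omega)) hdiv
    rcases Nat.eq_zero_or_pos i with h0 | h0
    · rw [h0, hmod]
    · have := hrec (i - 1) (by omega)
      simpa [Nat.sub_add_cancel h0] using this

/-- Theorem 3.2 of the paper: combining `M` exact weight perfect matching criteria
into a single one via base-`(N·C_max + 1)` representation. A perfect matching in the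
complete bipartite graph on two vertex sets of size `N` is a permutation `π`. -/
theorem combine_exact_matchings (M N : ℕ) (hM : 0 < M) (hN : 0 < N) (Cmax : ℕ)
    (c : Fin M → Fin N → Fin N → ℕ) (hc : ∀ i u v, c i u v ≤ Cmax)
    (α : Fin M → ℕ) (hα : ∀ i, α i ≤ N * Cmax) :
    (∃ π : Equiv.Perm (Fin N), ∀ i, ∑ j, c i j (π j) = α i) ↔
      (∃ π : Equiv.Perm (Fin N),
        ∑ j, (∑ i, c i j (π j) * (N * Cmax + 1) ^ (i : ℕ))
          = ∑ i, α i * (N * Cmax + 1) ^ (i : ℕ)) := by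
  have key : ∀ π : Equiv.Perm (Fin N),
      ∑ j, (∑ i, c i j (π j) * (N * Cmax + 1) ^ (i : ℕ))
        = ∑ i, (∑ j, c i j (π j)) * (N * Cmax + 1) ^ (i : ℕ) := by
    intro π
    rw [Finset.sum_comm]
    simp [Finset.sum_mul]
  have sbound : ∀ (π : Equiv.Perm (Fin N)) (i : Fin M),
      ∑ j, c i j (π j) ≤ N * Cmax := by
    intro π i
    calc ∑ j, c i j (π j) ≤ ∑ _j : Fin N, Cmax := Finset.sum_le_sum fun j _ => hc i j (π j)
    _ = N * Cmax := by simp [mul_comm]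
  constructor
  · rintro ⟨π, hπ⟩
    exact ⟨π, by rw [key]; exact Finset.sum_congr rfl fun i _ => by rw [hπ i]⟩
  · rintro ⟨π, hπ⟩
    refine ⟨π, fun i => ?_⟩
    rw [key] at hπ
    set B := N * Cmax + 1 with hB
    have hπ' : ∑ k ∈ Finset.range M,
        (fun k => if h : k < M then ∑ j, c ⟨k, h⟩ j (π j) else 0) k * B ^ k
        = ∑ k ∈ Finset.range M, (fun k => if h : k < M then α ⟨k, h⟩ else 0) k * B ^ k := by
      rw [Finset.sum_range fun k => _, Finset.sum_range fun k => _]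
      simpa using hπ
    have := base_rep_unique B M _ _
      (fun k hk => by simp [hk]; exact Nat.lt_succ_of_le (sbound π ⟨k, hk⟩))
      (fun k hk => by simp [hk]; exact Nat.lt_succ_of_le (hα ⟨k, hk⟩)) hπ' i i.2
    simpa [i.2] using this
end

section
/- Let N ≥ 1, let y₁, …, y_N be integers with y_i > 1 for all i, let α be a positive integer, set z_i = α·y_i and p = 2N+1, and let a₁, …, a_{4N+3} be the sequence of rationals consisting of z₁, …, z_N, followed by N+1 copies of 1/p, followed by 2N+2 copies of 0. If there exist γ₁, …, γ_N ∈ {0,1,2} with ∑_{i=1}^N z_i γ_i = α², then there exists a permutation π of {1,…,4N+3} such that ∑_{u=1}^{4N+3} a_{π(u)} · a_{π(u+1)} = α²/p, with the convention π(4N+4) := π(1). (Forward direction, case (i), of the paper's Theorem 4.1.) -/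
/-!
Write `q = 1/p`. Build the tour from blocks that all start with a `0`; then no edge between
consecutive blocks (including the closing edge of the cycle) costs anything, and the cost of the
tour is the sum of the path costs of the blocks. The `zᵢ` with `γᵢ = 2` are chained between `q`s in
one block `0, q, z, q, …, z, q` of cost `2q ∑ zᵢ`; each `zᵢ` with `γᵢ = 1` gets a block
`0, z, q, 0` of cost `q zᵢ`, each `zᵢ` with `γᵢ = 0` a block `0, z, 0, q` of cost `0`, and each
`zᵢ` with `γᵢ = 2` also a block `0, 0`. The total is `q ∑ zᵢ γᵢ = α²/p`, and the blocks use exactly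
`N + 1` copies of `q` and `2N + 2` zeros.
-/

namespace List

section Cost

variable {R : Type*} [NonUnitalNonAssocSemiring R]

def pathCost : List R → R
  | x :: y :: t => x * y + pathCost (y :: t)
  | _ => 0

def cycleCost (l : List R) : R := pathCost (l ++ l.take 1)

@[simp] lemma pathCost_nil : pathCost ([] : List R) = 0 := rfl

@[simp] lemma pathCost_singleton (x : R) : pathCost [x] = 0 := rfl

@[simp] lemma pathCost_cons_cons (x y : R) (t : List R) :
    pathCost (x :: y :: t) = x * y + pathCost (y :: t) := rfl

@[simp] lemma pathCost_zero_cons (t : List R) : pathCost (0 :: t) = pathCost t := by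
  cases t <;> simp

lemma pathCost_append_zero_cons (l m : List R) :
    pathCost (l ++ 0 :: m) = pathCost l + pathCost m := by
  induction l with
  | nil => simp
  | cons x l ih =>
    cases l with
    | nil => simp
    | cons y l => simp only [cons_append, pathCost_cons_cons] at ih ⊢; rw [ih, add_assoc]

lemma pathCost_append_flatMap_zero_cons (l : List R) (bs : List (List R)) :
    pathCost (l ++ bs.flatMap (0 :: ·)) = pathCost l + (bs.map pathCost).sum := by
  induction bs generalizing l with
  | nil => simp
  | cons b bs ih => rw [flatMap_cons, cons_append, pathCost_append_zero_cons, ih]; simp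

lemma cycleCost_flatMap_zero_cons (bs : List (List R)) :
    cycleCost (bs.flatMap (0 :: ·)) = (bs.map pathCost).sum := by
  cases bs with
  | nil => rfl
  | cons b bs =>
    have hclose : (b :: bs).flatMap (0 :: ·) ++ ((b :: bs).flatMap (0 :: ·)).take 1
        = [] ++ (b :: bs ++ [[]]).flatMap (0 :: ·) := by simp
    rw [cycleCost, hclose, pathCost_append_flatMap_zero_cons]
    simp

lemma pathCost_ofFn {m : ℕ} (f : Fin (m + 1) → R) :
    pathCost (ofFn f) = ∑ i : Fin m, f i.castSucc * f i.succ := by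
  induction m with
  | zero => simp
  | succ m ih =>
    have h := ih (fun i => f i.succ)
    rw [ofFn_succ] at h
    rw [ofFn_succ, ofFn_succ, pathCost_cons_cons, h, Fin.sum_univ_succ]
    simp [← Fin.castSucc_succ]

lemma cycleCost_ofFn {n : ℕ} [NeZero n] (f : Fin n → R) :
    cycleCost (ofFn f) = ∑ u, f u * f (u + 1) := by
  obtain ⟨m, rfl⟩ := Nat.exists_eq_succ_of_ne_zero (NeZero.ne n)
  have hsnoc : ofFn f ++ (ofFn f).take 1 = ofFn (Fin.snoc f (f 0) : Fin (m + 2) → R) := by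
    rw [ofFn_succ' (Fin.snoc _ _)]
    simp [ofFn_succ]
  rw [cycleCost, hsnoc, pathCost_ofFn, Fin.sum_univ_castSucc, Fin.sum_univ_castSucc]
  simp [Fin.coeSucc_eq_succ, ← Fin.castSucc_succ]

end Cost

lemma Perm.exists_ofFn_comp_eq {α : Type*} [LinearOrder α] {n : ℕ} {a : Fin n → α}
    {l : List α} (h : l ~ ofFn a) : ∃ π : Equiv.Perm (Fin n), ofFn (a ∘ π) = l := by
  obtain rfl : l.length = n := by simpa using h.length_eq
  -- Sorting both tuples yields the same sorted list, so one sorting permutation followed by the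
  -- inverse of the other carries `a` to `l`.
  have hsort : l.get ∘ Tuple.sort l.get = a ∘ Tuple.sort a := by
    apply ofFn_injective
    refine Perm.eq_of_sortedLE (Tuple.monotone_sort _).sortedLE_ofFn
      (Tuple.monotone_sort a).sortedLE_ofFn ?_
    have h' : ofFn l.get ~ ofFn a := by rwa [ofFn_get]
    exact ((Tuple.sort _).ofFn_comp_perm _).trans (h'.trans ((Tuple.sort a).ofFn_comp_perm a).symm)
  refine ⟨(Tuple.sort l.get).symm.trans (Tuple.sort a), ?_⟩
  conv_rhs => rw [← ofFn_get l]
  congr 1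
  ext u
  simpa using (congrFun hsort ((Tuple.sort l.get).symm u)).symm

lemma ofFn_dite_eq_append_replicate {R : Type*} {n m k s t : ℕ} (z : Fin n → R) (b c : R)
    (hs : n + m = s) (ht : s + k = t) :
    ofFn (fun u : Fin t => if h : (u : ℕ) < n then z ⟨u, h⟩ else if (u : ℕ) < s then b else c)
      = ofFn z ++ replicate m b ++ replicate k c := by
  apply ext_getElem
  · simp only [length_ofFn, length_append, length_replicate]; omega
  · intro i _ _
    simp only [List.getElem_ofFn, append_assoc, getElem_append, length_ofFn, length_replicate,
      getElem_replicate, dite_eq_ite]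
    split_ifs <;> first | rfl | omega

section Partition

variable {ι : Type*} (γ : ι → ℕ)

lemma filter_append_filter_append_filter_perm_of_le_two (l : List ι) (hγ : ∀ i ∈ l, γ i ≤ 2) :
    l.filter (γ · = 2) ++ l.filter (γ · = 1) ++ l.filter (γ · = 0) ~ l := by
  induction l with
  | nil => simp
  | cons i l ih =>
    have ih := ih fun j hj => hγ j (mem_cons_of_mem i hj)
    have hi := hγ i mem_cons_self
    interval_cases h : γ i
    · simpa [h, ← append_assoc] using perm_middle.trans (ih.cons i)
    · simpa [h] using perm_middle.trans ((append_assoc .. ▸ ih).cons i)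
    · simpa [h] using ih

lemma sum_map_mul_natCast_of_le_two {R : Type*} [CommSemiring R] (z : ι → R) (l : List ι)
    (hγ : ∀ i ∈ l, γ i ≤ 2) :
    (l.map fun i => z i * γ i).sum
      = 2 * ((l.filter (γ · = 2)).map z).sum + ((l.filter (γ · = 1)).map z).sum := by
  induction l with
  | nil => simp
  | cons i l ih =>
    have ih := ih fun j hj => hγ j (mem_cons_of_mem i hj)
    have hi := hγ i mem_cons_self
    interval_cases h : γ i <;> simp [h, ih, two_mul, mul_two, add_left_comm, add_assoc]

end Partition

end List

open List

section Tour

variable {R : Type*} [CommSemiring R]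

def tourBlocks (q : R) (L₂ L₁ L₀ : List R) : List (List R) :=
  (0 :: q :: L₂.flatMap (fun z => [z, q])) ::
    (L₂.map (fun _ => [0]) ++ L₁.map (fun z => [z, q, 0]) ++ L₀.map (fun z => [z, 0, q]))

lemma pathCost_cons_flatMap_pair (q : R) (L : List R) :
    pathCost (q :: L.flatMap (fun z => [z, q])) = 2 * q * L.sum := by
  induction L with
  | nil => simp
  | cons z L ih =>
    simp only [flatMap_cons, cons_append, nil_append, pathCost_cons_cons, ih, sum_cons]
    ring

lemma sum_pathCost_tourBlocks (q : R) (L₂ L₁ L₀ : List R) :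
    ((tourBlocks q L₂ L₁ L₀).map pathCost).sum = q * (2 * L₂.sum + L₁.sum) := by
  simp [tourBlocks, pathCost_cons_flatMap_pair, Function.comp_def, sum_map_mul_right]
  ring

lemma tourBlocks_flatMap_perm (q : R) (L₂ L₁ L₀ : List R) :
    (tourBlocks q L₂ L₁ L₀).flatMap (0 :: ·) ~ L₂ ++ L₁ ++ L₀ ++
      replicate (L₂.length + L₁.length + L₀.length + 1) q ++
      replicate (2 * (L₂.length + L₁.length + L₀.length) + 2) 0 := by
  classical
  rw [← Multiset.coe_eq_coe]
  simp only [tourBlocks, flatMap_cons, flatMap_append, flatMap_map, ← Multiset.coe_add,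
    ← Multiset.cons_coe, ← Multiset.coe_bind, ← Multiset.coe_replicate, Multiset.bind_cons,
    Multiset.map_const', Multiset.coe_card, Multiset.coe_nil, Multiset.bind_zero,
    Multiset.map_id', add_zero]
  refine Multiset.ext.2 fun x => ?_
  simp only [Multiset.count_cons, Multiset.count_add, Multiset.coe_count, count_replicate,
    beq_iff_eq, @eq_comm _ x]
  split_ifs <;> omega

end Tour

theorem exact_cost_tour_forward_general (N : ℕ) (y : Fin N → ℤ) (α : ℕ) :
    let a : Fin (4 * N + 3) → ℚ := fun u =>
      if h : (u : ℕ) < N then ((α : ℚ) * (y ⟨u, h⟩ : ℚ))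
      else if (u : ℕ) < 2 * N + 1 then 1 / (2 * N + 1 : ℚ)
      else 0
    (∃ γ : Fin N → ℕ, (∀ i, γ i ≤ 2) ∧
        ∑ i, (α : ℤ) * y i * (γ i : ℤ) = (α : ℤ) ^ 2) →
      ∃ π : Equiv.Perm (Fin (4 * N + 3)),
        ∑ u : Fin (4 * N + 3), a (π u) * a (π (u + 1))
          = (α : ℚ) ^ 2 / (2 * N + 1 : ℚ) := by
  intro a ⟨γ, hγ, hsum⟩
  set z : Fin N → ℚ := fun i => α * y i
  set q : ℚ := 1 / (2 * N + 1)
  set L : ℕ → List ℚ := fun c => ((finRange N).filter (γ · = c)).map z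
  have hpart : L 2 ++ L 1 ++ L 0 ~ ofFn z := by
    simpa [L, ofFn_eq_map] using ((finRange N).filter_append_filter_append_filter_perm_of_le_two
      γ fun i _ => hγ i).map z
  have hlen : (L 2).length + (L 1).length + (L 0).length = N := by
    simpa [add_assoc] using hpart.length_eq
  have hofn : ofFn a = ofFn z ++ replicate (N + 1) q ++ replicate (2 * N + 2) 0 :=
    ofFn_dite_eq_append_replicate z q 0 (by omega) (by omega)
  have hweight : 2 * (L 2).sum + (L 1).sum = (α : ℚ) ^ 2 := by
    rw [← sum_map_mul_natCast_of_le_two γ z _ fun i _ => hγ i, ← ofFn_eq_map, sum_ofFn]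
    simp only [z]
    exact_mod_cast hsum
  obtain ⟨π, hπ⟩ := ((tourBlocks_flatMap_perm q (L 2) (L 1) (L 0)).trans
    (by rw [hlen, hofn]; exact (hpart.append_right _).append_right _)).exists_ofFn_comp_eq
  refine ⟨π, ?_⟩
  calc ∑ u, a (π u) * a (π (u + 1))
      = cycleCost (ofFn (a ∘ π)) := (cycleCost_ofFn (a ∘ π)).symm
    _ = q * (2 * (L 2).sum + (L 1).sum) := by
      rw [hπ, cycleCost_flatMap_zero_cons, sum_pathCost_tourBlocks]
    _ = (α : ℚ) ^ 2 / (2 * N + 1 : ℚ) := by rw [hweight]; ring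

/-- Forward direction (case (i)) of the paper's Theorem 4.1: if some
`γ₁,…,γ_N ∈ {0,1,2}` satisfy `∑ z_i γ_i = α²` (where `z_i = α·y_i`), then the
sequence `a` consisting of `z₁,…,z_N`, then `N+1` copies of `1/p` (`p = 2N+1`),
then `2N+2` zeros, admits a cyclic arrangement `π` of total adjacent-product cost
exactly `α²/p`. -/
theorem exact_cost_tour_forward (N : ℕ) (hN : 1 ≤ N) (y : Fin N → ℤ)
    (hy : ∀ i, 1 < y i) (α : ℕ) (hα : 0 < α) :
    let a : Fin (4 * N + 3) → ℚ := fun u =>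
      if h : (u : ℕ) < N then ((α : ℚ) * (y ⟨u, h⟩ : ℚ))
      else if (u : ℕ) < 2 * N + 1 then 1 / (2 * N + 1 : ℚ)
      else 0
    (∃ γ : Fin N → ℕ, (∀ i, γ i ≤ 2) ∧
        ∑ i, (α : ℤ) * y i * (γ i : ℤ) = (α : ℤ) ^ 2) →
      ∃ π : Equiv.Perm (Fin (4 * N + 3)),
        ∑ u : Fin (4 * N + 3), a (π u) * a (π (u + 1))
          = (α : ℚ) ^ 2 / (2 * N + 1 : ℚ) :=
  exact_cost_tour_forward_general N y α
end

section
/- Let N ≥ 1, let y₁, …, y_N be integers with y_i > 1 for all i, let α be a positive integer, set z_i = α·y_i and p = 2N+1, and let a₁, …, a_{4N+3} be the sequence of rationals consisting of z₁, …, z_N, followed by N+1 copies of 1/p, followed by 2N+2 copies of 0. If there exists a permutation π of {1,…,4N+3} such that ∑_{u=1}^{4N+3} a_{π(u)} · a_{π(u+1)} = α²/p (with π(4N+4) := π(1)), then there exist γ₁, …, γ_N ∈ {0,1,2} with ∑_{i=1}^N z_i γ_i = α², equivalently ∑_{i=1}^N y_i γ_i = α. (Reverse direction, case (ii), of the paper's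 Theorem 4.1.) -/
/-!
Let `p = 2N + 1` and write each entry as `a_v = A_v + χ_v / p`, where `A_v` (`bigPart`) is
`z_i` or `0` and `χ_v ∈ {0, 1}` (`unitPart`) marks the entries `1/p`. With `σ` the successor
map of the tour and `S(f, g) = ∑ f v * g (σ v)`, multiplying the cost identity by `p²` gives
`p² S(A,A) + p (S(A,χ) + S(χ,A)) + S(χ,χ) = p α²`.
Since `0 ≤ S(χ,χ) ≤ ∑ χ = N + 1 < p` and `p ∣ S(χ,χ)`, the last term vanishes; then
`S(A,A) ≤ α² < (2α)²` while every nonzero product of two `z`'s is at least `(2α)²`, so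
`S(A,A) = 0`. What remains reads `∑ A_v (χ(σ v) + χ(σ⁻¹ v)) = α²`: one may take for `γ_i` the
number of tour neighbours of `z_i` equal to `1/p`.
-/

open Finset

namespace Equiv.Perm

variable {ι R : Type*} [Fintype ι]

def tourSum [NonUnitalNonAssocSemiring R] (σ : Perm ι) (f g : ι → R) : R :=
  ∑ v, f v * g (σ v)

theorem sum_mul_comp_add_one_eq_tourSum [NonUnitalNonAssocSemiring R] {n : ℕ} [NeZero n]
    (π : Perm (Fin n)) (f g : Fin n → R) :
    ∑ u, f (π u) * g (π (u + 1)) = tourSum (π * Equiv.addRight 1 * π⁻¹) f g := by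
  rw [tourSum, ← Equiv.sum_comp π (fun v => f v * _)]
  simp [Perm.mul_apply]

@[norm_cast]
theorem intCast_tourSum [Ring R] (σ : Perm ι) (f g : ι → ℤ) :
    ((tourSum σ f g : ℤ) : R) = tourSum σ (fun v => (f v : R)) (fun v => (g v : R)) := by
  simp [tourSum]

theorem tourSum_nonneg [Semiring R] [PartialOrder R] [IsOrderedRing R] {σ : Perm ι}
    {f g : ι → R} (hf : ∀ v, 0 ≤ f v) (hg : ∀ v, 0 ≤ g v) : 0 ≤ tourSum σ f g :=
  sum_nonneg fun v _ => mul_nonneg (hf v) (hg _)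

theorem tourSum_le_sum [Semiring R] [PartialOrder R] [IsOrderedRing R] (σ : Perm ι)
    {f : ι → R} (h0 : ∀ v, 0 ≤ f v) (h1 : ∀ v, f v ≤ 1) : tourSum σ f f ≤ ∑ v, f v :=
  sum_le_sum fun v _ => mul_le_of_le_one_right (h0 v) (h1 _)

theorem tourSum_add_tourSum_swap [CommSemiring R] (σ : Perm ι) (f g : ι → R) :
    tourSum σ f g + tourSum σ g f = ∑ v, f v * (g (σ v) + g (σ⁻¹ v)) := by
  rw [tourSum, tourSum, ← Equiv.sum_comp σ⁻¹ (fun v => g v * f (σ v)), ← sum_add_distrib]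
  simp only [coe_inv, apply_symm_apply, mul_add, mul_comm]

theorem tourSum_add_div_mul_sq {K : Type*} [Field K] (σ : Perm ι) (f g : ι → K) {p : K}
    (hp : p ≠ 0) :
    tourSum σ (fun v => f v + g v / p) (fun v => f v + g v / p) * p ^ 2 =
      p ^ 2 * tourSum σ f f + p * (tourSum σ f g + tourSum σ g f) + tourSum σ g g := by
  simp only [tourSum, sum_mul, mul_sum, ← sum_add_distrib]
  refine sum_congr rfl fun v _ => ?_
  field_simp
  ring

theorem tourSum_eq_zero_of_lt_sq [CommRing R] [LinearOrder R] [IsStrictOrderedRing R]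
    {σ : Perm ι} {A : ι → R} {c : R} (hc : 0 ≤ c) (hA : ∀ v, A v = 0 ∨ c ≤ A v)
    (h : tourSum σ A A < c ^ 2) : tourSum σ A A = 0 := by
  have hA0 (v) : 0 ≤ A v := (hA v).elim (·.ge) hc.trans
  refine sum_eq_zero fun v _ => ?_
  rcases hA v with hv | hv
  · simp [hv]
  rcases hA (σ v) with hσv | hσv
  · simp [hσv]
  have : c ^ 2 ≤ tourSum σ A A := calc
    c ^ 2 ≤ A v * A (σ v) := by rw [sq]; exact mul_le_mul hv hσv hc (hA0 v)
    _ ≤ tourSum σ A A := single_le_sum (f := fun v => A v * A (σ v))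
      (fun w _ => mul_nonneg (hA0 w) (hA0 _)) (mem_univ v)
  exact absurd this h.not_ge

theorem sum_mul_neighbours_eq_sq_of_tourSum_eq {σ : Perm ι} {A χ : ι → ℤ} {p α : ℤ}
    (hp : 0 < p) (hα : 0 < α) (hA : ∀ v, A v = 0 ∨ 2 * α ≤ A v) (hχ : ∀ v, χ v = 0 ∨ χ v = 1)
    (hχp : ∑ v, χ v < p)
    (hcost : tourSum σ (fun v => (A v + χ v / p : ℚ)) (fun v => (A v + χ v / p : ℚ)) =
      α ^ 2 / p) :
    ∑ v, A v * (χ (σ v) + χ (σ⁻¹ v)) = α ^ 2 := by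
  have hscaled : p ^ 2 * tourSum σ A A + p * (tourSum σ A χ + tourSum σ χ A) + tourSum σ χ χ =
      p * α ^ 2 := by
    have hpQ : (p : ℚ) ≠ 0 := by positivity
    have := tourSum_add_div_mul_sq σ (fun v => (A v : ℚ)) (χ ·) hpQ
    rw [hcost] at this
    qify
    rw [← this]
    field_simp
  have hA0 (v) : 0 ≤ A v := (hA v).elim (·.ge) fun h => by omega
  have hχ0 (v) : 0 ≤ χ v := by rcases hχ v with h | h <;> simp [h]
  have hχ1 (v) : χ v ≤ 1 := by rcases hχ v with h | h <;> simp [h]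
  have hχχ : tourSum σ χ χ = 0 :=
    Int.eq_zero_of_dvd_of_nonneg_of_lt (tourSum_nonneg hχ0 hχ0)
      ((tourSum_le_sum σ hχ0 hχ1).trans_lt hχp)
      ⟨α ^ 2 - p * tourSum σ A A - (tourSum σ A χ + tourSum σ χ A), by linear_combination hscaled⟩
  have hunscaled : p * tourSum σ A A + (tourSum σ A χ + tourSum σ χ A) = α ^ 2 := by
    rw [hχχ] at hscaled
    exact mul_left_cancel₀ hp.ne' (by linear_combination hscaled)
  have hAA : tourSum σ A A = 0 := by
    refine tourSum_eq_zero_of_lt_sq (by omega) hA ?_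
    nlinarith [tourSum_nonneg (σ := σ) hA0 hA0, tourSum_nonneg (σ := σ) hA0 hχ0,
      tourSum_nonneg (σ := σ) hχ0 hA0]
  rw [← tourSum_add_tourSum_swap, ← hunscaled, hAA, mul_zero, zero_add]

end Equiv.Perm

theorem Fin.sum_castLE_eq_sum_of_eq_zero {M : Type*} [AddCommMonoid M] {m n : ℕ} (h : m ≤ n)
    (f : Fin n → M) (hf : ∀ v : Fin n, m ≤ v → f v = 0) :
    ∑ i : Fin m, f (i.castLE h) = ∑ v, f v := by
  refine sum_of_injOn _ (Fin.castLE_injective h).injOn (by simp) (fun v _ hv => hf v ?_) (by simp)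
  by_contra! hvm
  exact hv ⟨⟨v, hvm⟩, by simp, rfl⟩

namespace ExactCostTour

variable {N n : ℕ}

def bigPart (α : ℕ) (y : Fin N → ℤ) (v : Fin n) : ℤ :=
  if h : (v : ℕ) < N then α * y ⟨v, h⟩ else 0

def unitPart (N : ℕ) (v : Fin n) : ℤ :=
  if (v : ℕ) < N then 0 else if (v : ℕ) < 2 * N + 1 then 1 else 0

theorem bigPart_eq_zero_or_two_mul_le {α : ℕ} {y : Fin N → ℤ} (hy : ∀ i, 1 < y i) (v : Fin n) :
    bigPart α y v = 0 ∨ 2 * α ≤ bigPart α y v := by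
  unfold bigPart
  split_ifs with h
  · exact .inr (by nlinarith [hy ⟨v, h⟩])
  · exact .inl rfl

theorem sum_bigPart_mul (α : ℕ) (y : Fin N → ℤ) (h : N ≤ n) (g : Fin n → ℤ) :
    ∑ v, bigPart α y v * g v = ∑ i, α * y i * g (i.castLE h) := by
  rw [← Fin.sum_castLE_eq_sum_of_eq_zero h _ fun v hv => by simp [bigPart, hv.not_gt]]
  simp [bigPart]

theorem unitPart_eq_zero_or_one (v : Fin n) : unitPart N v = 0 ∨ unitPart N v = 1 := by
  unfold unitPart
  split_ifs <;> simp

theorem sum_unitPart (h : 2 * N + 1 < n) : ∑ v : Fin n, unitPart N v = N + 1 := by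
  have hIco (v : Fin n) :
      unitPart N v = if v ∈ Ico (⟨N, by omega⟩ : Fin n) ⟨2 * N + 1, by omega⟩ then 1 else 0 := by
    simp only [unitPart, mem_Ico, Fin.le_def, Fin.lt_def]
    split_ifs <;> omega
  simp only [hIco, sum_ite_mem, univ_inter, sum_const, Fin.card_Ico]
  simp
  omega

theorem exists_nat_le_two_of_sum_eq_sq {y : Fin N → ℤ} {α : ℕ} (hα : 0 < α) {g : Fin N → ℤ}
    (hg : ∀ i, 0 ≤ g i ∧ g i ≤ 2) (h : ∑ i, (α : ℤ) * y i * g i = (α : ℤ) ^ 2) :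
    ∃ γ : Fin N → ℕ, (∀ i, γ i ≤ 2) ∧
      ∑ i, (α : ℤ) * y i * (γ i : ℤ) = (α : ℤ) ^ 2 ∧ ∑ i, y i * (γ i : ℤ) = (α : ℤ) := by
  refine ⟨fun i => (g i).toNat, fun i => Int.toNat_le.2 (hg i).2, ?_, ?_⟩
  · simpa only [Int.toNat_of_nonneg (hg _).1] using h
  · refine mul_left_cancel₀ (show (α : ℤ) ≠ 0 by positivity) ?_
    rw [mul_sum, ← sq, ← h]
    simp only [Int.toNat_of_nonneg (hg _).1, mul_assoc]

end ExactCostTour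

open ExactCostTour Equiv.Perm

/-- Reverse direction (case (ii)) of the paper's Theorem 4.1: if the sequence `a`
consisting of `z₁,…,z_N` (`z_i = α·y_i`), then `N+1` copies of `1/p` (`p = 2N+1`),
then `2N+2` zeros, has a cyclic arrangement `π` of total adjacent-product cost
exactly `α²/p`, then some `γ₁,…,γ_N ∈ {0,1,2}` satisfy `∑ z_i γ_i = α²`,
equivalently `∑ y_i γ_i = α`. -/
theorem exact_cost_tour_reverse (N : ℕ) (hN : 1 ≤ N) (y : Fin N → ℤ)
    (hy : ∀ i, 1 < y i) (α : ℕ) (hα : 0 < α) :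
    let a : Fin (4 * N + 3) → ℚ := fun u =>
      if h : (u : ℕ) < N then ((α : ℚ) * (y ⟨u, h⟩ : ℚ))
      else if (u : ℕ) < 2 * N + 1 then 1 / (2 * N + 1 : ℚ)
      else 0
    (∃ π : Equiv.Perm (Fin (4 * N + 3)),
        ∑ u : Fin (4 * N + 3), a (π u) * a (π (u + 1))
          = (α : ℚ) ^ 2 / (2 * N + 1 : ℚ)) →
      ∃ γ : Fin N → ℕ, (∀ i, γ i ≤ 2) ∧
        ∑ i, (α : ℤ) * y i * (γ i : ℤ) = (α : ℤ) ^ 2 ∧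
        ∑ i, y i * (γ i : ℤ) = (α : ℤ) := by
  rintro a ⟨π, hπ⟩
  set σ := π * Equiv.addRight 1 * π⁻¹
  have ha : a = fun v => (bigPart α y v + unitPart N v / (2 * N + 1 : ℤ) : ℚ) := by
    funext v
    simp only [a, bigPart, unitPart]
    split_ifs <;> push_cast <;> ring
  have hcross := sum_mul_neighbours_eq_sq_of_tourSum_eq (σ := σ) (A := bigPart α y)
    (χ := unitPart N) (p := 2 * N + 1) (by positivity) (by positivity)
    (bigPart_eq_zero_or_two_mul_le hy) unitPart_eq_zero_or_one
    (by rw [sum_unitPart (by omega)]; omega)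
    (by rw [← ha, ← sum_mul_comp_add_one_eq_tourSum]; push_cast; exact hπ)
  have hle : N ≤ 4 * N + 3 := by omega
  rw [sum_bigPart_mul α y hle] at hcross
  refine exists_nat_le_two_of_sum_eq_sq hα (fun i => ?_) hcross
  have := unitPart_eq_zero_or_one (N := N) (σ (i.castLE hle))
  have := unitPart_eq_zero_or_one (N := N) (σ⁻¹ (i.castLE hle))
  omega
end

section
/- Let K ≥ 2 and define d : ℝ^K → ℝ by d(x₁,…,x_K) = ∏_{1 ≤ i < j ≤ K} (x_j − x_i). Then at every point x with pairwise distinct coordinates, for all indices i ≠ j the mixed second partial derivative is ∂²d/∂x_i∂x_j = d(x)·[ (∑_{k ≠ i} 1/(x_i − x_k))·(∑_{l ≠ j} 1/(x_j − x_l)) + 1/(x_j − x_i)² ]. (The off-diagonal Hessian formula for the Vandermonde determinant used in Section 5.) -/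
/-!
Write `d = det (vandermonde x) = ∏_{i<j} (x_j - x_i)`. Away from the diagonals every factor is
nonzero, so the product rule in logarithmic form gives `∂_j d = d · S_j` with
`S_j = ∑_{l ≠ j} 1/(x_j - x_l)`: the factor `x_j - x_i` contributes `1/(x_j - x_i)` to `∂_j`
and `-1/(x_j - x_i) = 1/(x_i - x_j)` to `∂_i`. This identity holds on the open set of injective
points, so it may be differentiated again: `∂_i (d · S_j) = d · S_i · S_j + d · ∂_i S_j`, and for
`i ≠ j` only the term `l = i` of `S_j` depends on `x_i`, with `∂_i S_j = 1/(x_j - x_i)²`.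
-/

open Finset Filter Topology Matrix

theorem Function.Injective.eventually_injective_nhds {X ι : Type*} [TopologicalSpace X]
    [T2Space X] [Finite ι] {x : ι → X} (hx : Function.Injective x) :
    ∀ᶠ y in 𝓝 x, Function.Injective y := by
  have hpair : ∀ a b : ι, ∀ᶠ y in 𝓝 x, y a = y b → a = b := fun a b => by
    by_cases hab : a = b
    · simp [hab]
    · filter_upwards [(isOpen_ne_fun (continuous_apply a) (continuous_apply b)).mem_nhds
        (show x ∈ {y : ι → X | y a ≠ y b} from hx.ne hab)] with y hy heq using absurd heq hy
  simp only [← eventually_all] at hpair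
  exact hpair

theorem HasFDerivAt.finsetProd_of_ne_zero {𝕜 E ι : Type*} [NontriviallyNormedField 𝕜]
    [NormedAddCommGroup E] [NormedSpace 𝕜 E] {u : Finset ι} {g : ι → E → 𝕜}
    {g' : ι → E →L[𝕜] 𝕜} {x : E} (hg : ∀ i ∈ u, HasFDerivAt (g i) (g' i) x)
    (hx : ∀ i ∈ u, g i x ≠ 0) :
    HasFDerivAt (∏ i ∈ u, g i ·) ((∏ i ∈ u, g i x) • ∑ i ∈ u, (g i x)⁻¹ • g' i) x := by
  classical
  refine (HasFDerivAt.finsetProd hg).congr_fderiv ?_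
  rw [smul_sum]
  refine sum_congr rfl fun i hi => ?_
  rw [← mul_prod_erase u (g · x) hi, smul_smul, mul_right_comm, mul_inv_cancel₀ (hx i hi),
    one_mul]

section

variable {𝕜 : Type*} [NontriviallyNormedField 𝕜] {K : ℕ} {x : Fin K → 𝕜}

theorem hasFDerivAt_det_vandermonde (hx : Function.Injective x) :
    HasFDerivAt (fun y => (vandermonde y).det)
      ((vandermonde x).det • ∑ j, (∑ l ∈ univ.erase j, (x j - x l)⁻¹) •
        ContinuousLinearMap.proj (R := 𝕜) (φ := fun _ : Fin K => 𝕜) j) x := by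
  simp_rw [det_vandermonde, prod_sigma']
  refine (HasFDerivAt.finsetProd_of_ne_zero
    (g' := fun p => ContinuousLinearMap.proj p.2 - ContinuousLinearMap.proj p.1)
    (fun p _ => (hasFDerivAt_apply p.2 x).sub (hasFDerivAt_apply p.1 x))
    fun p hp => sub_ne_zero.2 (hx.ne (mem_Ioi.1 (mem_sigma.1 hp).2).ne')).congr_fderiv ?_
  congr 1
  ext1 v
  simp only [_root_.sum_apply, _root_.smul_apply, _root_.sub_apply,
    ContinuousLinearMap.proj_apply, smul_eq_mul, sum_mul, ← compl_singleton]
  rw [← sum_sigma' univ (fun i => Ioi i) fun i j => (x j - x i)⁻¹ * (v j - v i),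
    ← sum_sum_Ioi_add_eq_sum_sum_off_diag fun j i => (x i - x j)⁻¹ * v i]
  refine sum_congr rfl fun i _ => sum_congr rfl fun j _ => ?_
  rw [← neg_sub (x j), inv_neg]
  ring

theorem fderiv_det_vandermonde_apply_single (hx : Function.Injective x) (j : Fin K) :
    fderiv 𝕜 (fun y => (vandermonde y).det) x (Pi.single j 1) =
      (vandermonde x).det * ∑ l ∈ univ.erase j, (x j - x l)⁻¹ := by
  simp [(hasFDerivAt_det_vandermonde hx).fderiv, _root_.sum_apply, Pi.single_apply]

theorem hasFDerivAt_sum_inv_sub (hx : Function.Injective x) (j : Fin K) :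
    HasFDerivAt (fun y => ∑ l ∈ univ.erase j, (y j - y l)⁻¹)
      (∑ l ∈ univ.erase j, -((x j - x l) ^ 2)⁻¹ •
        (ContinuousLinearMap.proj j - ContinuousLinearMap.proj (R := 𝕜) (φ := fun _ : Fin K => 𝕜) l))
      x :=
  HasFDerivAt.fun_sum fun l hl =>
    (hasDerivAt_inv (sub_ne_zero.2 (hx.ne (ne_of_mem_erase hl).symm))).comp_hasFDerivAt x
      ((hasFDerivAt_apply j x).sub (hasFDerivAt_apply l x))

theorem fderiv_sum_inv_sub_apply_single (hx : Function.Injective x) {i j : Fin K}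
    (hij : i ≠ j) :
    fderiv 𝕜 (fun y => ∑ l ∈ univ.erase j, (y j - y l)⁻¹) x (Pi.single i 1) =
      ((x j - x i) ^ 2)⁻¹ := by
  rw [(hasFDerivAt_sum_inv_sub hx j).fderiv]
  simp [_root_.sum_apply, Pi.single_apply, hij.symm]

end

theorem vandermonde_det_hessian_offdiag_general (K : ℕ)
    (d : (Fin K → ℝ) → ℝ)
    (hd : d = fun x => ∏ i, ∏ j ∈ Finset.Ioi i, (x j - x i))
    (x : Fin K → ℝ) (hx : Function.Injective x) :
    ∀ i j : Fin K, i ≠ j →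
      fderiv ℝ (fun y => fderiv ℝ d y (Pi.single j 1)) x (Pi.single i 1)
        = d x * ((∑ k ∈ Finset.univ.erase i, 1 / (x i - x k))
            * (∑ l ∈ Finset.univ.erase j, 1 / (x j - x l))
            + 1 / (x j - x i) ^ 2) := by
  intro i j hij
  obtain rfl : d = fun y => (vandermonde y).det :=
    hd.trans (funext fun y => (det_vandermonde y).symm)
  have hgrad : (fun y => fderiv ℝ (fun y => (vandermonde y).det) y (Pi.single j 1)) =ᶠ[𝓝 x]
      fun y => (vandermonde y).det * ∑ l ∈ univ.erase j, (y j - y l)⁻¹ :=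
    hx.eventually_injective_nhds.mono fun y hy => fderiv_det_vandermonde_apply_single hy j
  rw [hgrad.fderiv_eq, fderiv_fun_mul (hasFDerivAt_det_vandermonde hx).differentiableAt
    (hasFDerivAt_sum_inv_sub hx j).differentiableAt]
  simp only [_root_.add_apply, _root_.smul_apply, smul_eq_mul,
    fderiv_det_vandermonde_apply_single hx i, fderiv_sum_inv_sub_apply_single hx hij, one_div]
  ring

/-- Off-diagonal Hessian formula for the Vandermonde determinant
`d(x) = ∏_{i<j} (x_j − x_i)`: at every point with pairwise distinct coordinates,
for `i ≠ j`,
`∂²d/∂x_i∂x_j = d(x)·[(∑_{k≠i} 1/(x_i−x_k))·(∑_{l≠j} 1/(x_j−x_l)) + 1/(x_j−x_i)²]`. -/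
theorem vandermonde_det_hessian_offdiag (K : ℕ) (hK : 2 ≤ K)
    (d : (Fin K → ℝ) → ℝ)
    (hd : d = fun x => ∏ i, ∏ j ∈ Finset.Ioi i, (x j - x i))
    (x : Fin K → ℝ) (hx : Function.Injective x) :
    ∀ i j : Fin K, i ≠ j →
      fderiv ℝ (fun y => fderiv ℝ d y (Pi.single j 1)) x (Pi.single i 1)
        = d x * ((∑ k ∈ Finset.univ.erase i, 1 / (x i - x k))
            * (∑ l ∈ Finset.univ.erase j, 1 / (x j - x l))
            + 1 / (x j - x i) ^ 2) :=
  vandermonde_det_hessian_offdiag_general K d hd x hx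
end
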